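/- A superstable configuration c with respect to q is maximal (among superstable configurations) if and only if deg(c) = g, where g = |E| − |V| + 1 is the genus. -/
import Mathlib


open Finset

/-- A finite loopless undirected multigraph on vertex set `V`, given by symmetric
edge multiplicities. -/
structure Multigraph (V : Type) where
  E : V → V → ℕ
  symm : ∀ u v, E u v = E v u
  loopless : ∀ v, E v v = 0

variable {V : Type} [Fintype V] [DecidableEq V]

/-- The valence (degree) of a vertex: number of incident edges. -/
def Multigraph.val (G : Multigraph V) (v : V) : ℕ := ∑ w, G.E v w

/-- Connectivity of a multigraph. -/
def Multigraph.Connected (G : Multigraph V) : Prop :=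
  ∀ u v : V, Relation.ReflTransGen (fun a b => 0 < G.E a b) u v

/-- Degree of a divisor. -/
def divDeg (D : V → ℤ) : ℤ := ∑ v, D v

/-- The graph Laplacian applied to a firing script. -/
def lap (G : Multigraph V) (σ : V → ℤ) : V → ℤ :=
  fun v => ∑ w, (G.E v w : ℤ) * (σ v - σ w)

/-- Lending move at `v`. -/
def lend (G : Multigraph V) (D : V → ℤ) (v : V) : V → ℤ :=
  fun w => if w = v then D v - (G.val v : ℤ) else D w + (G.E v w : ℤ)

/-- Borrowing move at `v`. -/
def borrow (G : Multigraph V) (D : V → ℤ) (v : V) : V → ℤ :=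
  fun w => if w = v then D v + (G.val v : ℤ) else D w - (G.E v w : ℤ)

/-- Linear equivalence: generated by lending moves. -/
def LinEquiv (G : Multigraph V) : (V → ℤ) → (V → ℤ) → Prop :=
  Relation.ReflTransGen (fun D D' => ∃ v, D' = lend G D v)

/-- Number of edges from `v` to vertices outside `S`. -/
def outdegS (G : Multigraph V) (S : Finset V) (v : V) : ℕ := ∑ w ∈ Sᶜ, G.E v w

/-- Fire all vertices of `S` simultaneously once. -/
def fireSet (G : Multigraph V) (D : V → ℤ) (S : Finset V) : V → ℤ :=
  fun v => if v ∈ S then D v - (outdegS G S v : ℤ) else D v + ∑ w ∈ S, (G.E v w : ℤ)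

/-- The number of edges of the multigraph. -/
def edgeCount (G : Multigraph V) : ℕ := (∑ u, ∑ w, G.E u w) / 2

/-- The genus of the multigraph, `g = |E| - |V| + 1`. -/
def genus (G : Multigraph V) : ℤ := (edgeCount G : ℤ) - (Fintype.card V : ℤ) + 1

/-- A configuration (with respect to `q`) is superstable if it is nonnegative away from
`q` and for every nonempty `S ⊆ V \ {q}` some `v ∈ S` has `c v < outdeg_S v`. -/
def Superstable (G : Multigraph V) (q : V) (c : V → ℤ) : Prop :=
  (∀ v, v ≠ q → 0 ≤ c v) ∧
  ∀ S : Finset V, S.Nonempty → (∀ v ∈ S, v ≠ q) →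
    ∃ v ∈ S, c v < (outdegS G S v : ℤ)


lemma outdegS_mono (G : Multigraph V) {T S : Finset V} (hTS : T ⊆ S) (v : V) :
    outdegS G S v ≤ outdegS G T v :=
  Finset.sum_le_sum_of_subset (Finset.compl_subset_compl.mpr hTS)

lemma outdegS_erase (G : Multigraph V) {S : Finset V} {v : V} (hv : v ∈ S) (a : V) :
    outdegS G (S.erase v) a = outdegS G S a + G.E a v := by
  unfold outdegS
  rw [Finset.compl_erase, Finset.sum_insert (by simp [hv])]
  omega

lemma aux_burn (G : Multigraph V) (q : V) (c : V → ℤ) (hss : Superstable G q c) :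
    ∀ S : Finset V, S ⊆ Finset.univ.erase q → ∃ c' : V → ℤ,
      (∀ v, v ∉ S → c' v = c v) ∧ (∀ v ∈ S, c v ≤ c' v) ∧
      (∀ T : Finset V, T.Nonempty → T ⊆ S → ∃ v ∈ T, c' v < (outdegS G T v : ℤ)) ∧
      2 * ∑ v ∈ S, (c' v + 1) =
        (∑ v ∈ S, ∑ w ∈ S, (G.E v w : ℤ)) + 2 * ∑ v ∈ S, (outdegS G S v : ℤ) := by
  intro S
  induction S using Finset.strongInduction with
  | _ S ih =>
    intro hS
    rcases S.eq_empty_or_nonempty with rfl | hne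
    · refine ⟨c, fun _ _ => rfl, by simp, ?_, by simp⟩
      intro T hT hTs
      exact absurd (Finset.subset_empty.mp hTs) (Finset.nonempty_iff_ne_empty.mp hT)
    · obtain ⟨v, hvS, hv⟩ := hss.2 S hne fun v hv => Finset.ne_of_mem_erase (hS hv)
      obtain ⟨c₀, h0, h1, h2, h3⟩ := ih (S.erase v) (Finset.erase_ssubset hvS)
        ((Finset.erase_subset v S).trans hS)
      set s := S.erase v with hs
      have hvs : v ∉ s := Finset.notMem_erase v S
      have hins : insert v s = S := Finset.insert_erase hvS
      set c' : V → ℤ := fun w => if w = v then (outdegS G S v : ℤ) - 1 else c₀ w with hc'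
      have hc'v : c' v = (outdegS G S v : ℤ) - 1 := by simp [hc']
      have hc'w : ∀ w, w ≠ v → c' w = c₀ w := fun w hw => by simp [hc', hw]
      refine ⟨c', ?_, ?_, ?_, ?_⟩
      · intro w hw
        have hwv : w ≠ v := fun h => hw (h ▸ hvS)
        rw [hc'w w hwv, h0 w (fun h => hw (Finset.mem_of_mem_erase h))]
      · intro w hw
        by_cases hwv : w = v
        · subst hwv; rw [hc'v]; omega
        · rw [hc'w w hwv]; exact h1 w (Finset.mem_erase.mpr ⟨hwv, hw⟩)
      · intro T hT hTS
        by_cases hvT : v ∈ T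
        · refine ⟨v, hvT, ?_⟩
          have hmono := outdegS_mono G hTS v
          rw [hc'v]
          omega
        · obtain ⟨w, hwT, hw⟩ := h2 T hT
            (fun x hx => Finset.mem_erase.mpr ⟨fun h => hvT (h ▸ hx), hTS hx⟩)
          exact ⟨w, hwT, by rw [hc'w w (fun h => hvT (h ▸ hwT))]; exact hw⟩
      · have hA : ∑ w ∈ S, (c' w + 1) = (outdegS G S v : ℤ) + ∑ w ∈ s, (c₀ w + 1) := by
          rw [← hins, Finset.sum_insert hvs, hins, hc'v]
          have hrw : ∑ w ∈ s, (c' w + 1) = ∑ w ∈ s, (c₀ w + 1) :=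
            Finset.sum_congr rfl (fun w hw => by rw [hc'w w (fun h => hvs (h ▸ hw))])
          rw [hrw]; ring
        have hB : (∑ a ∈ S, ∑ b ∈ S, (G.E a b : ℤ)) =
            (∑ a ∈ s, ∑ b ∈ s, (G.E a b : ℤ)) + ∑ b ∈ s, (G.E v b : ℤ)
              + ∑ a ∈ s, (G.E a v : ℤ) := by
          rw [← hins, Finset.sum_insert hvs, Finset.sum_insert hvs, G.loopless v]
          rw [Finset.sum_congr rfl (fun a (ha : a ∈ s) => Finset.sum_insert hvs)]
          rw [Finset.sum_add_distrib]
          push_cast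
          ring
        have hC : (∑ a ∈ S, (outdegS G S a : ℤ)) =
            (outdegS G S v : ℤ) + ((∑ a ∈ s, (outdegS G s a : ℤ))
              - ∑ a ∈ s, (G.E a v : ℤ)) := by
          rw [← hins, Finset.sum_insert hvs, hins]
          congr 1
          rw [← Finset.sum_sub_distrib]
          refine Finset.sum_congr rfl (fun a ha => ?_)
          have := outdegS_erase G hvS a
          rw [← hs] at this
          push_cast [this]
          ring
        have hD : ∑ b ∈ s, (G.E v b : ℤ) = ∑ a ∈ s, (G.E a v : ℤ) :=
          Finset.sum_congr rfl (fun a _ => by rw [G.symm])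
        rw [hA, hB, hC]
        linarith [h3]

lemma main_burn (G : Multigraph V) (q : V) (c : V → ℤ) (hss : Superstable G q c) :
    ∃ c' : V → ℤ, Superstable G q c' ∧ (∀ v, v ≠ q → c v ≤ c' v) ∧
      (∑ v ∈ Finset.univ.erase q, c' v) = genus G := by
  obtain ⟨c', h0, h1, h2, h3⟩ := aux_burn G q c hss (Finset.univ.erase q) (le_refl _)
  have hmem : ∀ v : V, v ≠ q → v ∈ Finset.univ.erase q := fun v hv =>
    Finset.mem_erase.mpr ⟨hv, Finset.mem_univ v⟩
  refine ⟨c', ⟨fun v hv => le_trans (hss.1 v hv) (h1 v (hmem v hv)), ?_⟩,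
    fun v hv => h1 v (hmem v hv), ?_⟩
  · intro T hT hTq
    exact h2 T hT (fun x hx => hmem x (hTq x hx))
  · -- compute the degree
    clear h0
    set eQ := Finset.univ.erase q with heQ
    have hq : q ∈ (Finset.univ : Finset V) := Finset.mem_univ q
    have hcompl : eQᶜ = {q} := by
      rw [heQ, Finset.compl_erase]
      simp
    have hout : ∀ v, outdegS G eQ v = G.E v q := by
      intro v
      unfold outdegS
      rw [hcompl, Finset.sum_singleton]
    have hB : ∑ a ∈ eQ, G.E a q = G.val q := by
      have e1 := Finset.sum_erase_add Finset.univ (fun a => G.E a q) hq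
      have e2 : ∑ a, G.E a q = G.val q := by
        unfold Multigraph.val
        exact Finset.sum_congr rfl (fun a _ => G.symm a q)
      have e3 : G.E q q = 0 := G.loopless q
      rw [← heQ] at e1
      omega
    have hI : ∑ u, ∑ w, G.E u w = (∑ a ∈ eQ, ∑ b ∈ eQ, G.E a b) + 2 * G.val q := by
      have e2 := Finset.sum_erase_add Finset.univ (fun a => ∑ w, G.E a w) hq
      have e3 : ∑ a ∈ eQ, (∑ w, G.E a w)
          = (∑ a ∈ eQ, ∑ b ∈ eQ, G.E a b) + ∑ a ∈ eQ, G.E a q := by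
        rw [← Finset.sum_add_distrib]
        refine Finset.sum_congr rfl (fun a _ => ?_)
        exact (Finset.sum_erase_add Finset.univ (fun w => G.E a w) hq).symm
      have e4 : (∑ w, G.E q w) = G.val q := rfl
      rw [← heQ] at e2
      omega
    have hcast : (∑ v ∈ eQ, ((c' v) + 1)) = (∑ v ∈ eQ, c' v) + (eQ.card : ℤ) := by
      rw [Finset.sum_add_distrib]
      simp
    have houts : ∑ v ∈ eQ, (outdegS G eQ v : ℤ) = (G.val q : ℤ) := by
      have : ∑ v ∈ eQ, (outdegS G eQ v : ℤ) = ∑ v ∈ eQ, ((G.E v q : ℕ) : ℤ) :=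
        Finset.sum_congr rfl (fun v _ => by rw [hout v])
      rw [this, ← Nat.cast_sum, hB]
    rw [hcast, houts] at h3
    have hIm : ((∑ u, ∑ w, G.E u w : ℕ) : ℤ)
        = ((∑ a ∈ eQ, ∑ b ∈ eQ, G.E a b : ℕ) : ℤ) + 2 * (G.val q : ℤ) := by
      exact_mod_cast hI
    have hinner : (∑ a ∈ eQ, ∑ b ∈ eQ, (G.E a b : ℤ))
        = ((∑ a ∈ eQ, ∑ b ∈ eQ, G.E a b : ℕ) : ℤ) := by push_cast; rfl
    rw [hinner] at h3
    set m : ℤ := (∑ v ∈ eQ, c' v) + (eQ.card : ℤ) with hm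
    have h3' : ((∑ u, ∑ w, G.E u w : ℕ) : ℤ) = 2 * m := by linarith
    have hnn : 0 ≤ ∑ v ∈ eQ, c' v :=
      Finset.sum_nonneg (fun v hv =>
        le_trans (hss.1 v (Finset.ne_of_mem_erase hv)) (h1 v hv))
    have hm0 : 0 ≤ m := by positivity
    have hT2 : (∑ u, ∑ w, G.E u w) = 2 * m.toNat := by
      have : ((∑ u, ∑ w, G.E u w : ℕ) : ℤ) = ((2 * m.toNat : ℕ) : ℤ) := by
        push_cast [Int.toNat_of_nonneg hm0]
        linarith
      exact_mod_cast this
    have hec : edgeCount G = m.toNat := by unfold edgeCount; omega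
    have hpos : 0 < Fintype.card V := Fintype.card_pos_iff.mpr ⟨q⟩
    have hcard : eQ.card = Fintype.card V - 1 := by
      rw [heQ, Finset.card_erase_of_mem hq, Finset.card_univ]
    have hc2 : (eQ.card : ℤ) = (Fintype.card V : ℤ) - 1 := by omega
    have htn : (m.toNat : ℤ) = m := Int.toNat_of_nonneg hm0
    unfold genus
    rw [hec]
    linarith

/-- A superstable configuration `c` with respect to `q` is maximal among superstable
configurations iff its degree equals the genus `g = |E| - |V| + 1`. -/
theorem maximal_superstable_iff_deg_genus (G : Multigraph V) (hG : G.Connected) (q : V)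
    (c : V → ℤ) (hss : Superstable G q c) :
    (∀ c' : V → ℤ, Superstable G q c' → (∀ v, v ≠ q → c v ≤ c' v) →
      ∀ v, v ≠ q → c' v = c v) ↔
    (∑ v ∈ Finset.univ.erase q, c v) = genus G := by
  constructor
  · intro hmax
    obtain ⟨c', hc'ss, hge, hdeg⟩ := main_burn G q c hss
    have heq : ∀ v ∈ Finset.univ.erase q, c v = c' v := fun v hv =>
      (hmax c' hc'ss hge v (Finset.ne_of_mem_erase hv)).symm
    rw [← hdeg]
    exact Finset.sum_congr rfl heq
  · intro hdeg c'' hss'' hge v hvq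
    obtain ⟨c', hc'ss, hge', hdeg'⟩ := main_burn G q c'' hss''
    have hle : ∀ w ∈ Finset.univ.erase q, c w ≤ c'' w := fun w hw =>
      hge w (Finset.ne_of_mem_erase hw)
    have h1 : ∑ w ∈ Finset.univ.erase q, c w ≤ ∑ w ∈ Finset.univ.erase q, c'' w :=
      Finset.sum_le_sum hle
    have h2 : ∑ w ∈ Finset.univ.erase q, c'' w ≤ ∑ w ∈ Finset.univ.erase q, c' w :=
      Finset.sum_le_sum (fun w hw => hge' w (Finset.ne_of_mem_erase hw))
    by_contra hne
    have hlt : c v < c'' v := lt_of_le_of_ne (hge v hvq) (fun h => hne h.symm)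
    have hv : v ∈ Finset.univ.erase q := Finset.mem_erase.mpr ⟨hvq, Finset.mem_univ v⟩
    have := Finset.sum_lt_sum hle ⟨v, hv, hlt⟩
    rw [hdeg] at this
    rw [hdeg'] at h2
    linarith
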